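/- Let S be a dense subsemigroup of ((0,∞),+), let (X, ⟨T_s⟩_{s∈S}) be a dynamical system, and let x ∈ X. If there exists an idempotent u in a minimal left ideal of O⁺(S) with T_u(x) = x, then x is a uniformly recurrent point near zero. -/
import Mathlib


open Filter Topology Set

noncomputable section

/-- The extension of `+` on a discrete semigroup to its Stone–Čech compactification
(space of ultrafilters): `A ∈ p + q` iff `{x : -x + A ∈ q} ∈ p`. -/
def uadd {α : Type} [Add α] (p q : Ultrafilter α) : Ultrafilter α :=
  p.bind fun a => q.map (a + ·)

/-- `O⁺(S) = {p ∈ βS : for all ε > 0, S ∩ (0,ε) ∈ p}`. -/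
def Oplus (S : AddSubsemigroup ℝ) : Set (Ultrafilter S) :=
  {p | ∀ ε : ℝ, 0 < ε → {x : S | (x : ℝ) < ε} ∈ p}

def IsLeftIdealIn {α : Type} [Add α] (T L : Set (Ultrafilter α)) : Prop :=
  L.Nonempty ∧ L ⊆ T ∧ ∀ p ∈ T, ∀ q ∈ L, uadd p q ∈ L

def IsMinimalLeftIdealIn {α : Type} [Add α] (T L : Set (Ultrafilter α)) : Prop :=
  IsLeftIdealIn T L ∧ ∀ L', IsLeftIdealIn T L' → L' ⊆ L → L' = L

/-- The smallest ideal `K(O⁺(S))`, described as the union of all minimal left ideals. -/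
def KOplus (S : AddSubsemigroup ℝ) : Set (Ultrafilter S) :=
  {p | ∃ L, IsMinimalLeftIdealIn (Oplus S) L ∧ p ∈ L}

/-- A dynamical system over an additive semigroup. -/
structure DynSys (σ : Type) [Add σ] where
  X : Type
  [ts : TopologicalSpace X]
  [cs : CompactSpace X]
  [t2 : T2Space X]
  T : σ → X → X
  cont : ∀ s, Continuous (T s)
  comp : ∀ s t, T s ∘ T t = T (s + t)

attribute [instance] DynSys.ts DynSys.cs DynSys.t2

/-- `T_p(x) = p-lim_{s ∈ S} T_s(x)`. -/
def DynSys.Tp {σ : Type} [Add σ] (D : DynSys σ) (p : Ultrafilter σ) (x : D.X) : D.X :=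
  (p.map fun s => D.T s x).lim

/-- `B` is syndetic near zero. -/
def syndeticNearZero (S : AddSubsemigroup ℝ) (A : Set S) : Prop :=
  ∀ ε : ℝ, 0 < ε → ∃ F : Finset S, F.Nonempty ∧ (∀ t ∈ F, (t : ℝ) < ε) ∧
    ∃ δ : ℝ, 0 < δ ∧ ∀ s : S, (s : ℝ) < δ → ∃ t ∈ F, t + s ∈ A

def uniformlyRecurrentNearZero (S : AddSubsemigroup ℝ) (D : DynSys S) (x : D.X) : Prop :=
  ∀ W ∈ nhds x, syndeticNearZero S {s : S | D.T s x ∈ W}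

/-- `x` and `y` are proximal near zero. -/
def proximalNearZero (S : AddSubsemigroup ℝ) (D : DynSys S) (x y : D.X) : Prop :=
  ∀ U ∈ nhdsSet (Set.diagonal D.X), ∀ ε : ℝ, 0 < ε →
    ∃ s : S, (s : ℝ) < ε ∧ (D.T s x, D.T s y) ∈ U

/-- `A` is piecewise syndetic near zero. -/
def piecewiseSyndeticNearZero (S : AddSubsemigroup ℝ) (A : Set S) : Prop :=
  ∃ (F : ℕ → Finset S) (δ : ℕ → ℝ),
    (∀ n : ℕ, (F n).Nonempty ∧ (∀ t ∈ F n, (t : ℝ) < 1 / (n + 1)) ∧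
      0 < δ n ∧ δ n < 1 / (n + 1)) ∧
    ∀ G : Finset S, ∀ μ : ℝ, 0 < μ → ∃ x : S, (x : ℝ) < μ ∧
      ∀ n : ℕ, ∀ g ∈ G, (g : ℝ) < δ n → ∃ t ∈ F n, t + (g + x) ∈ A

/-- `A` is a J-set near zero. -/
def JSetNearZero (S : AddSubsemigroup ℝ) (A : Set S) : Prop :=
  ∀ F : Finset (ℕ → S), F.Nonempty →
    (∀ f ∈ F, Tendsto (fun n => ((f n : S) : ℝ)) atTop (nhds 0)) →
    ∀ δ : ℝ, 0 < δ → ∃ a : S, (a : ℝ) < δ ∧ ∃ H : Finset ℕ, H.Nonempty ∧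
      ∀ f ∈ F, ∃ b ∈ A, (b : ℝ) = (a : ℝ) + ∑ t ∈ H, ((f t : S) : ℝ)

def J0 (S : AddSubsemigroup ℝ) : Set (Ultrafilter S) :=
  {p | p ∈ Oplus S ∧ ∀ A ∈ p, JSetNearZero S A}

/-- jointly intermittently uniformly recurrent near zero. -/
def JIUR0 (S : AddSubsemigroup ℝ) (D : DynSys S) (x y : D.X) : Prop :=
  ∀ U ∈ nhds y, piecewiseSyndeticNearZero S {s : S | D.T s x ∈ U ∧ D.T s y ∈ U}

/-- jointly intermittently almost uniformly recurrent near zero. -/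
def JIAUR0 (S : AddSubsemigroup ℝ) (D : DynSys S) (x y : D.X) : Prop :=
  ∀ U ∈ nhds y, JSetNearZero S {s : S | D.T s x ∈ U ∧ D.T s y ∈ U}

lemma mem_uadd' {α : Type} [Add α] {p q : Ultrafilter α} {A : Set α} :
    A ∈ uadd p q ↔ {a | {b | a + b ∈ A} ∈ q} ∈ p := Iff.rfl

lemma uadd_assoc' {α : Type} [AddSemigroup α] (p q r : Ultrafilter α) :
    uadd (uadd p q) r = uadd p (uadd q r) :=
  Ultrafilter.coe_injective <| Filter.ext fun A => by
    change A ∈ uadd (uadd p q) r ↔ A ∈ uadd p (uadd q r)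
    simp only [mem_uadd', Set.mem_setOf_eq, add_assoc]

lemma Oplus_add {S : AddSubsemigroup ℝ} {p q : Ultrafilter S}
    (hp : p ∈ Oplus S) (hq : q ∈ Oplus S) : uadd p q ∈ Oplus S := by
  intro ε hε
  rw [mem_uadd']
  have h1 : {x : S | (x : ℝ) < ε / 2} ∈ p := hp (ε / 2) (by linarith)
  refine Filter.mem_of_superset h1 fun a ha => ?_
  refine Filter.mem_of_superset (hq (ε / 2) (by linarith)) fun b hb => ?_
  simp only [Set.mem_setOf_eq] at *
  push_cast
  linarith

lemma exists_small {S : AddSubsemigroup ℝ}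
    (hdense : Set.Ioi (0 : ℝ) ⊆ closure (S : Set ℝ)) {δ : ℝ} (hδ : 0 < δ) :
    ∃ s : S, (s : ℝ) < δ := by
  have h : (δ / 2) ∈ closure (S : Set ℝ) := hdense (by simpa using half_pos hδ)
  obtain ⟨y, hyS, hy⟩ := Metric.mem_closure_iff.mp h (δ / 2) (half_pos hδ)
  refine ⟨⟨y, hyS⟩, ?_⟩
  simp only [Real.dist_eq] at hy
  have := abs_lt.mp hy
  simp only []
  linarith [this.1, this.2]

lemma Tp_mem {S : AddSubsemigroup ℝ} {D : DynSys S} {p : Ultrafilter S} {x : D.X}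
    {W : Set D.X} (hW : W ∈ nhds (D.Tp p x)) : {s : S | D.T s x ∈ W} ∈ p :=
  (p.map fun s => D.T s x).le_nhds_lim hW

theorem stmt4 (S : AddSubsemigroup ℝ)
    (hpos : ∀ x : ℝ, x ∈ S → 0 < x)
    (hdense : Set.Ioi (0 : ℝ) ⊆ closure (S : Set ℝ))
    (D : DynSys S) (x : D.X)
    (h : ∃ L u, IsMinimalLeftIdealIn (Oplus S) L ∧ u ∈ L ∧ uadd u u = u ∧ D.Tp u x = x) :
    uniformlyRecurrentNearZero S D x := by
  obtain ⟨L, u, ⟨⟨hLne, hLsub, hLideal⟩, hmin⟩, huL, huu, hux⟩ := h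
  have huO : u ∈ Oplus S := hLsub huL
  intro W hW
  obtain ⟨V, hVx, hVclosed, hVW⟩ := exists_mem_nhds_isClosed_subset hW
  set B : Set S := {s : S | D.T s x ∈ V} with hB
  set Dset : Set S := {t : S | {b : S | t + b ∈ B} ∈ u} with hD
  have hBu : B ∈ u := Tp_mem (by rwa [hux])
  -- Claim: every t ∈ Dset satisfies T t x ∈ W
  have hDW : ∀ t ∈ Dset, D.T t x ∈ W := by
    intro t ht
    apply hVW
    rw [← hVclosed.closure_eq]
    rw [mem_closure_iff_ultrafilter]
    refine ⟨(u.map fun s => D.T s x).map (D.T t), ?_, ?_⟩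
    · rw [Ultrafilter.mem_map, Ultrafilter.mem_map]
      refine Filter.mem_of_superset ht fun b hb => ?_
      simp only [Set.mem_setOf_eq, Set.mem_preimage] at *
      have := congrFun (D.comp t b) x
      simp only [Function.comp_apply] at this
      rwa [this]
    · have h1 : ↑(u.map fun s => D.T s x) ≤ nhds x := by
        have := (u.map fun s => D.T s x).le_nhds_lim
        rwa [show (u.map fun s => D.T s x).lim = x from hux] at this
      calc ↑((u.map fun s => D.T s x).map (D.T t))
          ≤ Filter.map (D.T t) (nhds x) := Filter.map_mono h1
        _ ≤ nhds (D.T t x) := (D.cont t).continuousAt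
  -- Claim: Dset is syndetic near zero
  have hsynd : syndeticNearZero S Dset := by
    by_contra hns
    simp only [syndeticNearZero, not_forall] at hns
    obtain ⟨ε, hε, hnF⟩ := hns
    push_neg at hnF
    -- hnF : ∀ F, F.Nonempty → (∀ t ∈ F, t < ε) → ∀ δ > 0, ∃ s < δ, ∀ t ∈ F, t + s ∉ Dset
    obtain ⟨t0, ht0⟩ := exists_small hdense hε
    set I := {P : Finset S × ℝ // P.1.Nonempty ∧ (∀ t ∈ P.1, (t : ℝ) < ε) ∧ 0 < P.2} with hI
    have hInh : Nonempty I := ⟨⟨({t0}, 1), Finset.singleton_nonempty t0,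
      by simpa using ht0, one_pos⟩⟩
    set C : I → Set S := fun i =>
      {s : S | (s : ℝ) < i.1.2 ∧ ∀ t ∈ i.1.1, t + s ∉ Dset} with hC
    have hCne : ∀ i, (C i).Nonempty := by
      rintro ⟨⟨F, δ⟩, hFne, hFε, hδ⟩
      obtain ⟨s, hs1, hs2⟩ := hnF F hFne hFε δ hδ
      exact ⟨s, hs1, hs2⟩
    have hdir : Directed (· ≥ ·) fun i => Filter.principal (C i) := by
      rintro ⟨⟨F, δ⟩, hFne, hFε, hδ⟩ ⟨⟨F', δ'⟩, hFne', hFε', hδ'⟩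
      refine ⟨⟨(F ∪ F', min δ δ'), Finset.Nonempty.inl hFne, ?_, lt_min hδ hδ'⟩, ?_, ?_⟩
      · intro t ht
        rcases Finset.mem_union.mp ht with h | h
        · exact hFε t h
        · exact hFε' t h
      · simp only [ge_iff_le, Filter.le_principal_iff, Filter.mem_principal]
        rintro s ⟨hs1, hs2⟩
        exact ⟨lt_of_lt_of_le hs1 (min_le_left _ _),
          fun t ht => hs2 t (Finset.mem_union_left _ ht)⟩
      · simp only [ge_iff_le, Filter.le_principal_iff, Filter.mem_principal]
        rintro s ⟨hs1, hs2⟩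
        exact ⟨lt_of_lt_of_le hs1 (min_le_right _ _),
          fun t ht => hs2 t (Finset.mem_union_right _ ht)⟩
    have hNB : ∀ i, (Filter.principal (C i)).NeBot :=
      fun i => Filter.principal_neBot_iff.mpr (hCne i)
    have : (⨅ i, Filter.principal (C i)).NeBot := Filter.iInf_neBot_of_directed' hdir hNB
    set q : Ultrafilter S := Ultrafilter.of (⨅ i, Filter.principal (C i)) with hq
    have hqC : ∀ i, C i ∈ q := fun i =>
      Ultrafilter.of_le _ (Filter.mem_iInf_of_mem i (Filter.mem_principal_self _))
    have hqO : q ∈ Oplus S := by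
      intro ε' hε'
      refine Filter.mem_of_superset
        (hqC ⟨({t0}, ε'), Finset.singleton_nonempty t0, by simpa using ht0, hε'⟩)
        fun s hs => hs.1
    -- build the left ideal L'
    have hquL : uadd q u ∈ L := hLideal q hqO u huL
    set L' : Set (Ultrafilter S) := {r' | ∃ r ∈ Oplus S, r' = uadd r (uadd q u)} with hL'
    have hL'ideal : IsLeftIdealIn (Oplus S) L' := by
      refine ⟨⟨uadd u (uadd q u), u, huO, rfl⟩, ?_, ?_⟩
      · rintro r' ⟨r, hr, rfl⟩
        exact Oplus_add hr (hLsub hquL)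
      · rintro p' hp' r' ⟨r, hr, rfl⟩
        exact ⟨uadd p' r, Oplus_add hp' hr, (uadd_assoc' p' r (uadd q u)).symm⟩
    have hL'sub : L' ⊆ L := by
      rintro r' ⟨r, hr, rfl⟩
      exact hLideal r hr _ hquL
    have hueq : u ∈ L' := (hmin L' hL'ideal hL'sub) ▸ huL
    obtain ⟨r, hrO, hru⟩ := hueq
    -- derive contradiction
    have hBr : {a : S | {b : S | a + b ∈ B} ∈ uadd q u} ∈ r := by
      have : B ∈ uadd r (uadd q u) := hru ▸ hBu
      rwa [mem_uadd'] at this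
    have haε : {a : S | (a : ℝ) < ε} ∈ r := hrO ε hε
    obtain ⟨a, ha1, ha2⟩ := Filter.nonempty_of_mem (Filter.inter_mem hBr haε)
    simp only [Set.mem_setOf_eq] at ha1 ha2
    rw [mem_uadd'] at ha1
    -- ha1 : {s | {b | s + b ∈ {b | a + b ∈ B}} ∈ u} ∈ q
    have hsub : {s : S | {b : S | s + b ∈ {b : S | a + b ∈ B}} ∈ u} ⊆ {s : S | a + s ∈ Dset} := by
      intro s hs
      simp only [Set.mem_setOf_eq] at *
      refine Filter.mem_of_superset hs fun b hb => ?_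
      simp only [Set.mem_setOf_eq] at *
      rwa [← add_assoc] at hb
    have h1 : {s : S | a + s ∈ Dset} ∈ q := Filter.mem_of_superset ha1 hsub
    have h2 : C ⟨({a}, 1), Finset.singleton_nonempty a, by simpa using ha2, one_pos⟩ ∈ q :=
      hqC _
    obtain ⟨s, hs1, hs2⟩ := Filter.nonempty_of_mem (Filter.inter_mem h1 h2)
    exact hs2.2 a (Finset.mem_singleton_self a) hs1
  -- conclude
  intro ε hε
  obtain ⟨F, hFne, hFε, δ, hδ, hFδ⟩ := hsynd ε hε
  exact ⟨F, hFne, hFε, δ, hδ, fun s hs => by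
    obtain ⟨t, htF, htD⟩ := hFδ s hs
    exact ⟨t, htF, hDW _ htD⟩⟩
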